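/- Let G₁ and G₂ be finite simple graphs with n₁, n₂ vertices and m₁, m₂ edges. Then F(G₁ ⊙ G₂) = F(G₁) + n₁F(G₂) + 3n₂M₁(G₁) + 3n₁M₁(G₂) + 6n₂²m₁ + 6n₁m₂ + n₁n₂(n₂² + 1), where ⊙ is the corona product. -/

import Mathlib

open Finset

/-- Degree of a vertex: the number of its neighbors. -/
noncomputable def degN {V : Type*} (G : SimpleGraph V) (v : V) : ℕ :=
  Nat.card (G.neighborSet v)

/-- F-index: the sum of cubes of the vertex degrees. -/
noncomputable def Findex {V : Type*} [Fintype V] (G : SimpleGraph V) : ℕ :=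
  ∑ v, (degN G v) ^ 3

/-- First Zagreb index: the sum of squares of the vertex degrees. -/
noncomputable def zagrebM1 {V : Type*} [Fintype V] (G : SimpleGraph V) : ℕ :=
  ∑ v, (degN G v) ^ 2

/-- Number of edges of a graph. -/
noncomputable def numEdges {V : Type*} (G : SimpleGraph V) : ℕ :=
  Nat.card G.edgeSet

/-- Corona product of two simple graphs: one copy of `G₁` and, for each vertex
`i` of `G₁`, a copy of `G₂` whose vertices are all joined to `i`. -/
def graphCorona {V₁ V₂ : Type*} (G₁ : SimpleGraph V₁) (G₂ : SimpleGraph V₂) :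
    SimpleGraph (V₁ ⊕ V₁ × V₂) where
  Adj x y :=
    match x, y with
    | .inl u, .inl v => G₁.Adj u v
    | .inl u, .inr p => u = p.1
    | .inr p, .inl u => p.1 = u
    | .inr p, .inr q => p.1 = q.1 ∧ G₂.Adj p.2 q.2
  symm := by
    constructor
    rintro (u | p) (v | q) h
    · exact h.symm
    · exact h.symm
    · exact h.symm
    · exact ⟨h.1.symm, h.2.symm⟩
  loopless := by
    constructor
    rintro (u | p) h
    · exact G₁.loopless.irrefl u h
    · exact G₂.loopless.irrefl p.2 h.2

/-! In the corona every vertex of `G₁` gains the `n₂` vertices of its copy of `G₂` as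
neighbours and every vertex of a copy gains one, so `F(G₁ ⊙ G₂) = ∑ (d + n₂)³ + n₁ ∑ (d + 1)³`.
Expanding the cubes leaves `F`, `M₁` and the degree sums, which the handshake lemma turns
into `2m`. -/

lemma degN_eq_degree {V : Type*} (G : SimpleGraph V) (v : V) [Fintype (G.neighborSet v)] :
    degN G v = G.degree v := by
  rw [degN, Nat.card_eq_fintype_card, SimpleGraph.card_neighborSet_eq_degree]

lemma sum_degN_eq_two_mul_numEdges {V : Type*} [Fintype V] (G : SimpleGraph V) :
    ∑ v, degN G v = 2 * numEdges G := by
  classical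
  simp only [degN_eq_degree, G.sum_degrees_eq_twice_card_edges, numEdges,
    Nat.card_eq_fintype_card, SimpleGraph.edgeFinset_card]

section Corona

variable {V₁ V₂ : Type*} (G₁ : SimpleGraph V₁) (G₂ : SimpleGraph V₂)

lemma neighborSet_graphCorona_inl (u : V₁) :
    (graphCorona G₁ G₂).neighborSet (.inl u) =
      Sum.inl '' G₁.neighborSet u ∪ Sum.inr '' Set.range (Prod.mk u) := by
  ext (v | q) <;> simp [graphCorona, eq_comm, Prod.ext_iff]

lemma neighborSet_graphCorona_inr (p : V₁ × V₂) :
    (graphCorona G₁ G₂).neighborSet (.inr p) =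
      {.inl p.1} ∪ Sum.inr '' (Prod.mk p.1 '' G₂.neighborSet p.2) := by
  ext (v | q) <;> simp [graphCorona, eq_comm, Prod.ext_iff, and_comm]

lemma degN_graphCorona_inl [Finite V₁] [Fintype V₂] (u : V₁) :
    degN (graphCorona G₁ G₂) (.inl u) = degN G₁ u + Fintype.card V₂ := by
  rw [degN, neighborSet_graphCorona_inl, Nat.card_coe_set_eq,
    Set.ncard_union_eq (by simp [Set.disjoint_left]),
    Set.ncard_image_of_injective _ Sum.inl_injective,
    Set.ncard_image_of_injective _ Sum.inr_injective,
    Set.ncard_range_of_injective (Prod.mk_right_injective u), ← Nat.card_coe_set_eq,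
    ← degN, Nat.card_eq_fintype_card]

lemma degN_graphCorona_inr [Finite V₂] (p : V₁ × V₂) :
    degN (graphCorona G₁ G₂) (.inr p) = degN G₂ p.2 + 1 := by
  rw [degN, neighborSet_graphCorona_inr, Nat.card_coe_set_eq,
    Set.ncard_union_eq (by simp), Set.ncard_singleton,
    Set.ncard_image_of_injective _ Sum.inr_injective,
    Set.ncard_image_of_injective _ (Prod.mk_right_injective p.1), ← Nat.card_coe_set_eq,
    ← degN, add_comm]

lemma sum_degN_graphCorona [Fintype V₁] [Fintype V₂] {M : Type*} [AddCommMonoid M]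
    (f : ℕ → M) :
    ∑ x, f (degN (graphCorona G₁ G₂) x) =
      ∑ u, f (degN G₁ u + Fintype.card V₂) +
        Fintype.card V₁ • ∑ v, f (degN G₂ v + 1) := by
  simp only [Fintype.sum_sum_type, Fintype.sum_prod_type, degN_graphCorona_inl,
    degN_graphCorona_inr, Finset.sum_const, Finset.card_univ]

end Corona

lemma sum_add_pow_three {ι R : Type*} [CommSemiring R] (s : Finset ι) (d : ι → R) (c : R) :
    ∑ i ∈ s, (d i + c) ^ 3 =
      ∑ i ∈ s, d i ^ 3 + 3 * c * ∑ i ∈ s, d i ^ 2 + 3 * c ^ 2 * ∑ i ∈ s, d i +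
        s.card * c ^ 3 := by
  rw [← nsmul_eq_mul, ← Finset.sum_const, Finset.mul_sum, Finset.mul_sum]
  simp only [← Finset.sum_add_distrib]
  exact Finset.sum_congr rfl fun i _ ↦ by ring

theorem Findex_corona {V₁ V₂ : Type*} [Fintype V₁] [Fintype V₂]
    (G₁ : SimpleGraph V₁) (G₂ : SimpleGraph V₂)
    (n₁ n₂ m₁ m₂ : ℕ) (hn₁ : Fintype.card V₁ = n₁) (hn₂ : Fintype.card V₂ = n₂)
    (hm₁ : numEdges G₁ = m₁) (hm₂ : numEdges G₂ = m₂) :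
    Findex (graphCorona G₁ G₂) =
      Findex G₁ + n₁ * Findex G₂ + 3 * n₂ * zagrebM1 G₁ + 3 * n₁ * zagrebM1 G₂
        + 6 * n₂ ^ 2 * m₁ + 6 * n₁ * m₂ + n₁ * n₂ * (n₂ ^ 2 + 1) := by
  rw [Findex, sum_degN_graphCorona G₁ G₂ (· ^ 3), sum_add_pow_three, sum_add_pow_three,
    sum_degN_eq_two_mul_numEdges, sum_degN_eq_two_mul_numEdges, Finset.card_univ,
    Finset.card_univ, hn₁, hn₂, hm₁, hm₂, smul_eq_mul]
  unfold Findex zagrebM1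
  push_cast
  ring
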